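/- arXiv:0801.2123 — 2 statements merged into one kernel-verified Lean document; each statement's English description precedes it below -/
import Mathlib

section
/- Let E be a real normed vector space and let 𝓛, 𝓖₁, …, 𝓖_m : E → ℝ be continuously (Fréchet) differentiable on a neighborhood of ŷ ∈ E. Suppose ŷ is a weak local minimum of 𝓛 subject to the isoperimetric constraints 𝓖ᵢ(y) = 𝓖ᵢ(ŷ) for i = 1, …, m (i.e., there exists δ > 0 such that 𝓛(ŷ) ≤ 𝓛(y) for all y with ‖y − ŷ‖ < δ satisfying 𝓖ᵢ(y) = 𝓖ᵢ(ŷ) for all i). Then either (i) for every choice of directions v₁, …, v_m ∈ E, the m × m matrix with entries D𝓖ᵢ(ŷ)(v_j) has determinant zero, or (ii) there exist real constants λ₁, …, λ_m such that D𝓛(ŷ)(η) = ∑_{i=1}^{m} λᵢ D𝓖ᵢ(ŷ)(η) for every η ∈ E. -/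
/-!
`E` need not be complete, so the Banach-space Lagrange multiplier theorem is applied to the
restrictions of `𝓛` and `𝓖` to the finite-dimensional slices `y₀ + span {η, v₁, …, vₘ}`. On each
slice it yields a nontrivial relation `∑ Λᵢ D𝓖ᵢ(y₀) + Λ₀ D𝓛(y₀) = 0`. Invertibility of the
matrix `(D𝓖ᵢ(y₀)(vⱼ))` forces `Λ₀ ≠ 0`, and it determines the normalized multipliers from their
values on the `vⱼ` alone, so they do not depend on `η`.
-/

section LagrangeMultipliers

variable {E ι : Type*} [NormedAddCommGroup E] [NormedSpace ℝ E] [Fintype ι]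
  {f : ι → E → ℝ} {f' : ι → StrongDual ℝ E} {φ : E → ℝ} {φ' : StrongDual ℝ E} {x₀ : E}

theorem IsLocalExtrOn.exists_multipliers_on_submodule
    (hextr : IsLocalExtrOn φ {x | ∀ i, f i x = f i x₀} x₀)
    (hf' : ∀ i, HasStrictFDerivAt (f i) (f' i) x₀) (hφ' : HasStrictFDerivAt φ φ' x₀)
    (S : Submodule ℝ E) [CompleteSpace S] :
    ∃ (Λ : ι → ℝ) (Λ₀ : ℝ), (Λ, Λ₀) ≠ 0 ∧ ∀ x ∈ S, ∑ i, Λ i * f' i x + Λ₀ * φ' x = 0 := by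
  set g : S → E := fun x => x₀ + x
  have hg0 : g 0 = x₀ := by simp [g]
  have hg : HasStrictFDerivAt g S.subtypeL 0 := S.subtypeL.hasStrictFDerivAt.const_add x₀
  have hextr' : IsLocalExtrOn (φ ∘ g) {x | ∀ i, (f i ∘ g) x = (f i ∘ g) 0} 0 :=
    (hg0 ▸ hextr).comp_continuousOn g (fun x hx => by simpa [hg0] using hx)
      (continuous_const.add continuous_subtype_val).continuousOn fun _ => rfl
  obtain ⟨Λ, Λ₀, hne, hsum⟩ := hextr'.exists_multipliers_of_hasStrictFDerivAt
    (fun i => (hg0 ▸ hf' i).comp 0 hg) ((hg0 ▸ hφ').comp 0 hg)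
  refine ⟨Λ, Λ₀, hne, fun x hx => ?_⟩
  simpa [mul_comm] using DFunLike.congr_fun hsum ⟨x, hx⟩

variable [DecidableEq ι]

theorem IsLocalExtrOn.exists_multipliers_on_submodule_of_det_ne_zero
    (hextr : IsLocalExtrOn φ {x | ∀ i, f i x = f i x₀} x₀)
    (hf' : ∀ i, HasStrictFDerivAt (f i) (f' i) x₀) (hφ' : HasStrictFDerivAt φ φ' x₀)
    {v : ι → E} (hdet : (Matrix.of fun i j => f' i (v j)).det ≠ 0)
    (S : Submodule ℝ E) [CompleteSpace S] (hv : ∀ j, v j ∈ S) :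
    ∃ μ : ι → ℝ, ∀ x ∈ S, φ' x = ∑ i, μ i * f' i x := by
  obtain ⟨Λ, Λ₀, hne, hrel⟩ := hextr.exists_multipliers_on_submodule hf' hφ' S
  have hΛ₀ : Λ₀ ≠ 0 := by
    rintro rfl
    have hΛ : Λ ≠ 0 := fun h => hne (by simp [h])
    exact hdet <| Matrix.exists_vecMul_eq_zero_iff.1
      ⟨Λ, hΛ, funext fun j => by simpa [Matrix.vecMul, dotProduct] using hrel _ (hv j)⟩
  refine ⟨fun i => -Λ i / Λ₀, fun x hx => ?_⟩
  simp only [neg_mul, div_mul_eq_mul_div, Finset.sum_neg_distrib, ← Finset.sum_div]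
  rw [eq_div_iff hΛ₀]
  linarith [hrel x hx]

theorem IsLocalExtrOn.exists_multipliers_of_det_ne_zero
    (hextr : IsLocalExtrOn φ {x | ∀ i, f i x = f i x₀} x₀)
    (hf' : ∀ i, HasStrictFDerivAt (f i) (f' i) x₀) (hφ' : HasStrictFDerivAt φ φ' x₀)
    {v : ι → E} (hdet : (Matrix.of fun i j => f' i (v j)).det ≠ 0) :
    ∃ μ : ι → ℝ, φ' = ∑ i, μ i • f' i := by
  have hM : IsUnit (Matrix.of fun i j => f' i (v j)) :=
    (Matrix.isUnit_iff_isUnit_det _).2 hdet.isUnit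
  have hslice (η : E) : ∃ μ : ι → ℝ, ∀ x ∈ insert η (Set.range v), φ' x = ∑ i, μ i * f' i x := by
    have := FiniteDimensional.span_of_finite ℝ ((Set.finite_range v).insert η)
    obtain ⟨μ, hμ⟩ := hextr.exists_multipliers_on_submodule_of_det_ne_zero hf' hφ' hdet _
      fun j => Submodule.subset_span (Set.mem_insert_of_mem η (Set.mem_range_self j))
    exact ⟨μ, fun x hx => hμ x (Submodule.subset_span hx)⟩
  obtain ⟨μ, hμ⟩ := hslice 0
  refine ⟨μ, ContinuousLinearMap.ext fun η => ?_⟩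
  obtain ⟨μ', hμ'⟩ := hslice η
  have hμμ' : μ' = μ := Matrix.vecMul_injective_of_isUnit hM <| funext fun j =>
    (hμ' _ (Set.mem_insert_of_mem η (Set.mem_range_self j))).symm.trans
      (hμ _ (Set.mem_insert_of_mem 0 (Set.mem_range_self j)))
  simpa [hμμ'] using hμ' η (Set.mem_insert η _)

end LagrangeMultipliers

/-- Lagrange multiplier theorem for the isoperimetric problem: if `y₀` is a
weak local minimum of `𝓛` subject to the constraints `𝓖 i y = 𝓖 i y₀`,
and `𝓛, 𝓖 1, …, 𝓖 m` are continuously differentiable on a neighborhood of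
`y₀`, then either the `m × m` matrix `(D𝓖ᵢ(y₀)(v j))` has zero determinant
for every choice of directions `v`, or there are multipliers `λ i` with
`D𝓛(y₀)(η) = ∑ i, λ i * D𝓖ᵢ(y₀)(η)` for all `η`. -/
theorem isoperimetric_lagrange_multipliers
    {E : Type*} [NormedAddCommGroup E] [NormedSpace ℝ E]
    (m : ℕ) (𝓛 : E → ℝ) (𝓖 : Fin m → E → ℝ) (y₀ : E)
    (hsmooth : ∃ U ∈ nhds y₀, ContDiffOn ℝ 1 𝓛 U ∧ ∀ i, ContDiffOn ℝ 1 (𝓖 i) U)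
    (hmin : ∃ δ > 0, ∀ y : E, ‖y - y₀‖ < δ →
      (∀ i, 𝓖 i y = 𝓖 i y₀) → 𝓛 y₀ ≤ 𝓛 y) :
    (∀ v : Fin m → E,
      Matrix.det (Matrix.of fun i j : Fin m => fderiv ℝ (𝓖 i) y₀ (v j)) = 0) ∨
    (∃ lam : Fin m → ℝ, ∀ η : E,
      fderiv ℝ 𝓛 y₀ η = ∑ i, lam i * fderiv ℝ (𝓖 i) y₀ η) := by
  obtain ⟨U, hU, h𝓛, h𝓖⟩ := hsmooth
  obtain ⟨δ, hδ, hmin⟩ := hmin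
  have hextr : IsLocalExtrOn 𝓛 {y | ∀ i, 𝓖 i y = 𝓖 i y₀} y₀ := IsMinFilter.isExtr <| by
    filter_upwards [inter_mem_nhdsWithin _ (Metric.ball_mem_nhds y₀ hδ)] with y ⟨hc, hy⟩
    exact hmin y (mem_ball_iff_norm.1 hy) hc
  rw [or_iff_not_imp_left, not_forall]
  rintro ⟨v, hv⟩
  obtain ⟨lam, hlam⟩ := hextr.exists_multipliers_of_det_ne_zero
    (fun i => ((h𝓖 i).contDiffAt hU).hasStrictFDerivAt one_ne_zero)
    ((h𝓛.contDiffAt hU).hasStrictFDerivAt one_ne_zero) hv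
  exact ⟨lam, fun η => by simp [hlam]⟩
end

section
/- Let E be a real normed vector space, let d ≥ 2, and let L₁, …, L_d : E → ℝ be continuously (Fréchet) differentiable on a neighborhood of ŷ ∈ E. If ŷ is a weak locally Pareto optimal solution for (L₁, …, L_d), then for each i ∈ {1, …, d} one of the following holds: (i) for every choice of directions v_j ∈ E (j ∈ {1, …, d}, j ≠ i), the (d−1) × (d−1) matrix with entries DL_j(ŷ)(v_k), j, k ∈ {1, …, d} \ {i}, has determinant zero; or (ii) there exist real constants λ_j (j ≠ i) such that DL_i(ŷ)(η) = ∑_{j ≠ i} λ_j DL_j(ŷ)(η) for every η ∈ E. -/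
/-!
If the derivatives `DL_j(ŷ)` were linearly independent, the map `η ↦ (DL_j(ŷ) η)_j` would be onto
`ℝ^d`, so some direction `w` has `DL_j(ŷ) w = -1` for every `j`; moving from `ŷ` along `w` then
decreases all `L_j` at once, contradicting Pareto optimality. Hence `∑ c_j DL_j(ŷ) = 0` for some
`c ≠ 0`. If the `DL_j(ŷ)`, `j ≠ i`, are dependent, every matrix `(DL_j(ŷ)(v_k))` has dependent
rows; otherwise `DL_i(ŷ)` lies in their span.
-/

open Filter Set Topology

section LinearAlgebra

variable {K ι : Type*} [Field K] [Fintype ι] [DecidableEq ι]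

theorem Matrix.det_of_not_linearIndependent {α : Type*} {f : ι → α → K}
    (hf : ¬ LinearIndependent K f) (v : ι → α) :
    (Matrix.of fun j k => f j (v k)).det = 0 := by
  by_contra hdet
  exact hf (LinearIndependent.of_comp (LinearMap.funLeft K K v)
    (Matrix.linearIndependent_rows_of_det_ne_zero hdet))

theorem exists_eq_sum_smul_of_not_linearIndependent {V : Type*} [AddCommGroup V] [Module K V]
    {f : ι → V} (hf : ¬ LinearIndependent K f) {i : ι}
    (hi : LinearIndependent K fun j : {j // j ≠ i} => f j) :
    ∃ c : {j // j ≠ i} → K, f i = ∑ j, c j • f j := by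
  by_contra hnot
  refine hf (linearIndepOn_univ_iff.1 ?_)
  have huniv : (univ : Set ι) = insert i {j | j ≠ i} := by
    ext j
    simp [em]
  rw [huniv, linearIndepOn_insert (by simp)]
  refine ⟨hi, fun hmem => hnot ?_⟩
  rw [image_eq_range, Submodule.mem_span_range_iff_exists_fun] at hmem
  obtain ⟨c, hc⟩ := hmem
  exact ⟨c, hc.symm⟩

theorem det_eq_zero_or_exists_eq_sum_of_not_linearIndependent {α : Type*} {f : ι → α → K}
    (hf : ¬ LinearIndependent K f) (i : ι) :
    (∀ v : {j // j ≠ i} → α, (Matrix.of fun j k : {j // j ≠ i} => f j (v k)).det = 0) ∨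
      ∃ c : {j // j ≠ i} → K, ∀ x, f i x = ∑ j, c j * f j x := by
  by_cases hi : LinearIndependent K fun j : {j // j ≠ i} => f j
  · obtain ⟨c, hc⟩ := exists_eq_sum_smul_of_not_linearIndependent hf hi
    exact Or.inr ⟨c, fun x => by simp [hc, Finset.sum_apply]⟩
  · exact Or.inl (Matrix.det_of_not_linearIndependent hi)

end LinearAlgebra

section Pareto

variable {ι E : Type*} [NormedAddCommGroup E] [NormedSpace ℝ E]

def IsWeakLocalParetoMin (L : ι → E → ℝ) (y₀ : E) : Prop :=
  ∃ δ > 0, ¬ ∃ y : E, ‖y - y₀‖ < δ ∧ (∀ i, L i y ≤ L i y₀) ∧ (∃ j, L j y < L j y₀)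

theorem HasFDerivAt.eventually_lt_of_apply_neg {F : E → ℝ} {F' : E →L[ℝ] ℝ} {y₀ w : E}
    (hF : HasFDerivAt F F' y₀) (hw : F' w < 0) :
    ∀ᶠ t in 𝓝[>] (0 : ℝ), F (y₀ + t • w) < F y₀ := by
  have hline : HasDerivAt (fun t : ℝ => F (y₀ + t • w)) (F' w) 0 :=
    hF.comp_hasDerivAt_of_eq 0 (by simpa using ((hasDerivAt_id (0 : ℝ)).smul_const w).const_add y₀)
      (by simp)
  filter_upwards [hline.tendsto_slope_zero_right.eventually (eventually_lt_nhds hw),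
    self_mem_nhdsWithin] with t hslope (ht : 0 < t)
  simp only [zero_add, zero_smul, add_zero, smul_eq_mul] at hslope
  by_contra hge
  have := mul_nonneg (inv_pos.2 ht).le (sub_nonneg.2 (not_lt.1 hge))
  linarith

theorem IsWeakLocalParetoMin.not_linearIndependent [Finite ι] [Nonempty ι] {L : ι → E → ℝ}
    {L' : ι → E →L[ℝ] ℝ} {y₀ : E} (hmin : IsWeakLocalParetoMin L y₀)
    (hL : ∀ j, HasFDerivAt (L j) (L' j) y₀) :
    ¬ LinearIndependent ℝ fun j => ⇑(L' j) := by
  intro hli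
  obtain ⟨δ, hδ, hnone⟩ := hmin
  obtain ⟨w, hw⟩ : ∃ w, ∀ j, L' j w = -1 := by
    have hspan := span_flip_eq_top_iff_linearIndependent.2 hli
    have hrange : flip (fun j => ⇑(L' j)) = ⇑(ContinuousLinearMap.pi L' : E →ₗ[ℝ] ι → ℝ) := rfl
    rw [hrange, ← LinearMap.coe_range, Submodule.span_eq] at hspan
    obtain ⟨w, hw⟩ := LinearMap.range_eq_top.1 hspan (-1)
    exact ⟨w, fun j => congrFun hw j⟩
  have hdescent : ∀ᶠ t in 𝓝[>] (0 : ℝ), ∀ j, L j (y₀ + t • w) < L j y₀ :=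
    eventually_all.2 fun j => (hL j).eventually_lt_of_apply_neg (by simp [hw])
  have hsmall : ∀ᶠ t in 𝓝[>] (0 : ℝ), t • w ∈ Metric.ball (0 : E) δ :=
    ((continuous_id.smul continuous_const).tendsto' (0 : ℝ) (0 : E) (zero_smul ℝ w)).mono_left
      nhdsWithin_le_nhds |>.eventually (Metric.ball_mem_nhds 0 hδ)
  obtain ⟨t, hdesc, hnear⟩ := (hdescent.and hsmall).exists
  exact hnone ⟨y₀ + t • w, by simpa using hnear, fun j => (hdesc j).le,
    ⟨Classical.arbitrary ι, hdesc _⟩⟩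

end Pareto

theorem pareto_necessary_condition_general
    {E : Type*} [NormedAddCommGroup E] [NormedSpace ℝ E]
    (d : ℕ) (L : Fin d → E → ℝ) (y₀ : E)
    (hsmooth : ∃ U ∈ nhds y₀, ∀ i, ContDiffOn ℝ 1 (L i) U)
    (hpareto : ∃ δ > 0, ¬ ∃ y : E, ‖y - y₀‖ < δ ∧
      (∀ i, L i y ≤ L i y₀) ∧ (∃ j, L j y < L j y₀)) :
    ∀ i : Fin d,
      (∀ v : {j : Fin d // j ≠ i} → E,
        Matrix.det (Matrix.of fun j k : {j : Fin d // j ≠ i} =>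
          fderiv ℝ (L j.1) y₀ (v k)) = 0) ∨
      (∃ lam : {j : Fin d // j ≠ i} → ℝ, ∀ η : E,
        fderiv ℝ (L i) y₀ η = ∑ j, lam j * fderiv ℝ (L j.1) y₀ η) := by
  intro i
  have : Nonempty (Fin d) := ⟨i⟩
  obtain ⟨U, hU, hC1⟩ := hsmooth
  have hL : ∀ j, HasFDerivAt (L j) (fderiv ℝ (L j) y₀) y₀ := fun j =>
    (((hC1 j).contDiffAt hU).differentiableAt one_ne_zero).hasFDerivAt
  exact det_eq_zero_or_exists_eq_sum_of_not_linearIndependent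
    (IsWeakLocalParetoMin.not_linearIndependent hpareto hL) i

/-- Necessary condition for weak local Pareto optimality: if `y₀` is a weak
locally Pareto optimal solution for continuously differentiable functionals
`L 1, …, L d` (`d ≥ 2`), then for each `i` either the `(d-1) × (d-1)` matrix
`(DL_j(y₀)(v k))` indexed by `j, k ≠ i` is singular for every choice of
directions `v`, or `DL_i(y₀)` is a linear combination of the `DL_j(y₀)`,
`j ≠ i`. -/
theorem pareto_necessary_condition
    {E : Type*} [NormedAddCommGroup E] [NormedSpace ℝ E]
    (d : ℕ) (hd : 2 ≤ d) (L : Fin d → E → ℝ) (y₀ : E)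
    (hsmooth : ∃ U ∈ nhds y₀, ∀ i, ContDiffOn ℝ 1 (L i) U)
    (hpareto : ∃ δ > 0, ¬ ∃ y : E, ‖y - y₀‖ < δ ∧
      (∀ i, L i y ≤ L i y₀) ∧ (∃ j, L j y < L j y₀)) :
    ∀ i : Fin d,
      (∀ v : {j : Fin d // j ≠ i} → E,
        Matrix.det (Matrix.of fun j k : {j : Fin d // j ≠ i} =>
          fderiv ℝ (L j.1) y₀ (v k)) = 0) ∨
      (∃ lam : {j : Fin d // j ≠ i} → ℝ, ∀ η : E,
        fderiv ℝ (L i) y₀ η = ∑ j, lam j * fderiv ℝ (L j.1) y₀ η) :=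
  pareto_necessary_condition_general d L y₀ hsmooth hpareto
end
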